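/- arXiv:cond-mat/0203166 — 4 statements merged into one kernel-verified Lean document; each statement's English description precedes it below -/
import Mathlib

section
/- Let (X,Y) be bivariate Gaussian with zero means, unit variances and correlation ρ ∈ (−1,1), and let A ⊆ ℝ with P(Y ∈ A) > 0. Then the conditional correlation coefficient of X and Y given Y ∈ A equals ρ / sqrt(ρ² + (1−ρ²)/Var(Y | Y ∈ A)). -/
open MeasureTheory ProbabilityTheory Filter Real Set

/-- Expectation of `f` conditioned on the event `A`. -/
noncomputable def cExp {Ω : Type*} [MeasurableSpace Ω] (μ : Measure Ω) (A : Set Ω)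
    (f : Ω → ℝ) : ℝ :=
  (∫ ω in A, f ω ∂μ) / (μ A).toReal

/-- Variance of `f` conditioned on the event `A`. -/
noncomputable def cVar {Ω : Type*} [MeasurableSpace Ω] (μ : Measure Ω) (A : Set Ω)
    (f : Ω → ℝ) : ℝ :=
  cExp μ A (fun ω => (f ω) ^ 2) - (cExp μ A f) ^ 2

/-- Covariance of `f` and `g` conditioned on the event `A`. -/
noncomputable def cCov {Ω : Type*} [MeasurableSpace Ω] (μ : Measure Ω) (A : Set Ω)
    (f g : Ω → ℝ) : ℝ :=
  cExp μ A (fun ω => f ω * g ω) - cExp μ A f * cExp μ A g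

/-- Correlation coefficient of `f` and `g` conditioned on the event `A`. -/
noncomputable def cCorr {Ω : Type*} [MeasurableSpace Ω] (μ : Measure Ω) (A : Set Ω)
    (f g : Ω → ℝ) : ℝ :=
  cCov μ A f g / Real.sqrt (cVar μ A f * cVar μ A g)

/-- The standard normal cumulative distribution function `Φ`. -/
noncomputable def stdPhi (x : ℝ) : ℝ := ((gaussianReal 0 1) (Set.Iic x)).toReal

/-- The standard normal density `φ`. -/
noncomputable def stdphi (x : ℝ) : ℝ := Real.exp (-x ^ 2 / 2) / Real.sqrt (2 * Real.pi)

/-!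
Conditioning on an event `{Y ∈ A}` determined by `Y` keeps `Y` and `Z` independent and leaves
the law of `Z` unchanged. Under the conditional measure `P[|Y ⁻¹' A]` the conditional moments are
ordinary covariances and variances, so with `v = Var(Y | Y ∈ A)` bilinearity gives
`Cov(X, Y | Y ∈ A) = ρ v` and `Var(X | Y ∈ A) = ρ² v + (1 - ρ²)`. Finally `v > 0` because `Y` has
no atoms, and the formula follows by dividing numerator and denominator by `v`.
-/

open scoped ENNReal

section CondMoments

variable {Ω : Type*} {mΩ : MeasurableSpace Ω} {μ : Measure Ω} {A : Set Ω}

lemma cExp_eq_integral_cond (f : Ω → ℝ) : cExp μ A f = ∫ ω, f ω ∂μ[|A] := by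
  rw [cExp, ProbabilityTheory.cond, integral_smul_measure, ENNReal.toReal_inv, div_eq_inv_mul, smul_eq_mul]

variable [IsProbabilityMeasure μ[|A]] {f g : Ω → ℝ}

lemma cCov_eq_covariance (hf : MemLp f 2 μ[|A]) (hg : MemLp g 2 μ[|A]) :
    cCov μ A f g = cov[f, g; μ[|A]] := by
  simp only [cCov, cExp_eq_integral_cond, covariance_eq_sub hf hg, Pi.mul_apply]

lemma cVar_eq_variance (hf : MemLp f 2 μ[|A]) : cVar μ A f = Var[f; μ[|A]] := by
  simp only [cVar, cExp_eq_integral_cond, variance_eq_sub hf, Pi.pow_apply]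

lemma cCorr_eq_covariance_div (hf : MemLp f 2 μ[|A]) (hg : MemLp g 2 μ[|A]) :
    cCorr μ A f g = cov[f, g; μ[|A]] / √(Var[f; μ[|A]] * Var[g; μ[|A]]) := by
  rw [cCorr, cCov_eq_covariance hf hg, cVar_eq_variance hf, cVar_eq_variance hg]

end CondMoments

lemma MeasureTheory.MemLp.cond {Ω E : Type*} {mΩ : MeasurableSpace Ω} {μ : Measure Ω}
    [NormedAddCommGroup E] {p : ℝ≥0∞} {f : Ω → E} (hf : MemLp f p μ) {A : Set Ω}
    (hA : μ A ≠ 0) : MemLp f p μ[|A] :=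
  (hf.restrict A).smul_measure (ENNReal.inv_ne_top.mpr hA)

namespace ProbabilityTheory

variable {Ω : Type*} {mΩ : MeasurableSpace Ω} {μ : Measure Ω}

section CondPreimage

variable {β γ : Type*} {mβ : MeasurableSpace β} {mγ : MeasurableSpace γ} [IsFiniteMeasure μ]
  {Y : Ω → β} {Z : Ω → γ} {A : Set β}

lemma IndepFun.cond_preimage (h : Y ⟂ᵢ[μ] Z) (hY : Measurable Y) (hA : MeasurableSet A) :
    Y ⟂ᵢ[μ[|Y ⁻¹' A]] Z := by
  rw [indepFun_iff_measure_inter_preimage_eq_mul]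
  intro s t hs ht
  by_cases hμA : μ (Y ⁻¹' A) = 0
  · simp [cond_eq_zero_of_meas_eq_zero hμA]
  simp only [cond_apply (hY hA), ← Set.inter_assoc, ← Set.preimage_inter,
    h.measure_inter_preimage_eq_mul _ _ (hA.inter hs) ht, h.measure_inter_preimage_eq_mul _ _ hA ht,
    ENNReal.inv_mul_cancel_left hμA (measure_ne_top _ _)]
  ring

lemma IndepFun.map_cond_preimage (h : Y ⟂ᵢ[μ] Z) (hY : Measurable Y) (hZ : Measurable Z)
    (hA : MeasurableSet A) (hμA : μ (Y ⁻¹' A) ≠ 0) :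
    (μ[|Y ⁻¹' A]).map Z = μ.map Z := by
  ext t ht
  rw [Measure.map_apply hZ ht, Measure.map_apply hZ ht, cond_apply (hY hA),
    h.measure_inter_preimage_eq_mul _ _ hA ht, ENNReal.inv_mul_cancel_left hμA (measure_ne_top _ _)]

end CondPreimage

lemma variance_pos_of_measure_preimage_singleton [IsProbabilityMeasure μ] {Y : Ω → ℝ}
    (hY : MemLp Y 2 μ) (h : ∀ c, μ (Y ⁻¹' {c}) = 0) : 0 < Var[Y; μ] := by
  refine (variance_nonneg Y μ).lt_of_ne fun h0 ↦ ?_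
  have hae : ∀ᵐ ω ∂μ, Y ω = μ[Y] := ae_eq_integral_of_variance_eq_zero hY h0.symm
  have hnull : μ (Y ⁻¹' {μ[Y]} ∪ (Y ⁻¹' {μ[Y]})ᶜ) = 0 := measure_union_null (h _) (ae_iff.mp hae)
  simp at hnull

section LinearCombination

variable [IsFiniteMeasure μ] {Y Z : Ω → ℝ}

lemma IndepFun.covariance_smul_add_smul_left (h : Y ⟂ᵢ[μ] Z) (hY : MemLp Y 2 μ)
    (hZ : MemLp Z 2 μ) (a b : ℝ) : cov[a • Y + b • Z, Y; μ] = a * Var[Y; μ] := by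
  rw [covariance_add_left (hY.const_smul a) (hZ.const_smul b) hY, covariance_smul_left,
    covariance_smul_left, covariance_self hY.aemeasurable, h.symm.covariance_eq_zero hZ hY,
    mul_zero, add_zero]

lemma IndepFun.variance_smul_add_smul (h : Y ⟂ᵢ[μ] Z) (hY : MemLp Y 2 μ) (hZ : MemLp Z 2 μ)
    (a b : ℝ) : Var[a • Y + b • Z; μ] = a ^ 2 * Var[Y; μ] + b ^ 2 * Var[Z; μ] := by
  rw [ProbabilityTheory.variance_add (hY.const_smul a) (hZ.const_smul b), covariance_smul_left,
    covariance_smul_right, h.covariance_eq_zero hY hZ, variance_smul, variance_smul]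
  ring

end LinearCombination

end ProbabilityTheory

lemma mul_div_sqrt_mul_eq_div_sqrt_add_div (ρ t : ℝ) {v : ℝ} (hv : 0 < v) :
    ρ * v / √((ρ ^ 2 * v + t) * v) = ρ / √(ρ ^ 2 + t / v) := by
  have hsplit : (ρ ^ 2 * v + t) * v = v ^ 2 * (ρ ^ 2 + t / v) := by field_simp
  rw [hsplit, Real.sqrt_mul (sq_nonneg v), Real.sqrt_sq hv.le, mul_comm ρ v,
    mul_div_mul_left _ _ hv.ne']

theorem stmt4 {Ω : Type*} [MeasurableSpace Ω] (P : Measure Ω) [IsProbabilityMeasure P]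
    (Y Z : Ω → ℝ) (hY : Measurable Y) (hZ : Measurable Z)
    (hYlaw : Measure.map Y P = gaussianReal 0 1) (hZlaw : Measure.map Z P = gaussianReal 0 1)
    (hind : IndepFun Y Z P)
    (ρ : ℝ) (hρ : ρ ∈ Set.Ioo (-1 : ℝ) 1)
    (X : Ω → ℝ) (hX : X = fun ω => ρ * Y ω + Real.sqrt (1 - ρ ^ 2) * Z ω)
    (A : Set ℝ) (hA : MeasurableSet A) (hpos : 0 < P (Y ⁻¹' A)) :
    cCorr P (Y ⁻¹' A) X Y
      = ρ / Real.sqrt (ρ ^ 2 + (1 - ρ ^ 2) / cVar P (Y ⁻¹' A) Y) := by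
  have : IsProbabilityMeasure P[|Y ⁻¹' A] := cond_isProbabilityMeasure hpos.ne'
  have hZlawA : HasLaw Z (gaussianReal 0 1) P[|Y ⁻¹' A] :=
    ⟨hZ.aemeasurable, (hind.map_cond_preimage hY hZ hA hpos.ne').trans hZlaw⟩
  have hYmem : MemLp Y 2 P[|Y ⁻¹' A] :=
    (HasLaw.mk hY.aemeasurable hYlaw).hasGaussianLaw.memLp_two.cond hpos.ne'
  have hZmem : MemLp Z 2 P[|Y ⁻¹' A] := hZlawA.hasGaussianLaw.memLp_two
  have hindA : Y ⟂ᵢ[P[|Y ⁻¹' A]] Z := hind.cond_preimage hY hA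
  have hVarZ : Var[Z; P[|Y ⁻¹' A]] = 1 := by simp [hZlawA.variance_eq, variance_id_gaussianReal]
  have hVarY : 0 < Var[Y; P[|Y ⁻¹' A]] := by
    refine variance_pos_of_measure_preimage_singleton hYmem fun c ↦ cond_absolutelyContinuous ?_
    rw [← Measure.map_apply hY (measurableSet_singleton c), hYlaw]
    exact gaussianReal_absolutelyContinuous 0 one_ne_zero (measure_singleton c)
  have hs : √(1 - ρ ^ 2) ^ 2 = 1 - ρ ^ 2 := Real.sq_sqrt (by nlinarith [hρ.1, hρ.2])
  rw [show X = ρ • Y + √(1 - ρ ^ 2) • Z from hX,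
    cCorr_eq_covariance_div ((hYmem.const_smul _).add (hZmem.const_smul _)) hYmem,
    cVar_eq_variance hYmem, hindA.covariance_smul_add_smul_left hYmem hZmem,
    hindA.variance_smul_add_smul hYmem hZmem, hVarZ, mul_one, hs]
  exact mul_div_sqrt_mul_eq_div_sqrt_add_div ρ _ hVarY
end

section
/- For a bivariate Gaussian pair (X,Y) with zero means, unit variances and correlation ρ ∈ (0,1), the correlation of X and Y conditioned on Y > v satisfies ρ_v⁺ ~ (ρ/√(1−ρ²))·(1/v) as v → ∞; in particular ρ_v⁺ → 0. -/
open MeasureTheory ProbabilityTheory Filter Real Set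

/-!
Write `X = ρ Y + c Z` with `c = √(1 - ρ²)` and `Z` independent of `Y`. On the event `{Y > v}`
the variable `Z` stays centred with unit variance and uncorrelated with `Y`, so with
`s(v) = Var(Y | Y > v)` the conditional covariance is `ρ s(v)` and the conditional variance of `X`
is `ρ² s(v) + c²`; hence `ρ_v⁺ = ρ √s(v) / √(ρ² s(v) + c²)` and everything reduces to
`s(v) ~ 1 / v²`. With `Q` the Gaussian tail and `φ` the density, `s = 1 + v φ/Q - (φ/Q)²`, and
the expansion `Q/φ = 1/v - 1/v³ + 3/v⁵ + O(1/v⁷)` — obtained as two-sided bounds by integrating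
exact derivatives of `(polynomial in 1/x) · φ` — gives `v² s(v) → 1`.
-/

open scoped Topology NNReal

lemma gaussianPDFReal_zero_one : gaussianPDFReal 0 1 = stdphi := by
  ext x
  simp [gaussianPDFReal, stdphi, div_eq_inv_mul, mul_comm]

lemma stdphi_pos (x : ℝ) : 0 < stdphi x := by
  unfold stdphi; positivity

lemma hasDerivAt_stdphi (x : ℝ) : HasDerivAt stdphi (-x * stdphi x) x := by
  have h : HasDerivAt (fun y : ℝ => -y ^ 2 / 2) (-x) x :=
    ((hasDerivAt_pow 2 x).neg.div_const 2).congr_deriv (by push_cast; ring)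
  exact (h.exp.div_const _).congr_deriv (by simp only [stdphi]; ring)

lemma integrable_pow_mul_stdphi (n : ℕ) : Integrable fun x => x ^ n * stdphi x := by
  have h := (integrable_rpow_mul_exp_neg_mul_sq (b := 1 / 2) (by norm_num)
    (s := n) (by linarith [n.cast_nonneg (α := ℝ)])).div_const (√(2 * π))
  refine h.congr (ae_of_all _ fun x => ?_)
  simp only [Real.rpow_natCast, stdphi]
  ring_nf

lemma tendsto_pow_mul_stdphi_atTop (n : ℕ) :
    Tendsto (fun x => x ^ n * stdphi x) atTop (𝓝 0) := by
  have h := ((tendsto_rpow_abs_mul_exp_neg_mul_sq_cocompact (a := 1 / 2) (by norm_num) n).mono_left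
    atTop_le_cocompact).div_const (√(2 * π))
  rw [zero_div] at h
  refine h.congr' ?_
  filter_upwards [eventually_ge_atTop 0] with x hx
  simp only [abs_of_nonneg hx, Real.rpow_natCast, stdphi]
  ring_nf

lemma setIntegral_gaussianReal_zero_one {s : Set ℝ} (hs : MeasurableSet s) (f : ℝ → ℝ) :
    ∫ x in s, f x ∂gaussianReal 0 1 = ∫ x in s, f x * stdphi x := by
  rw [← integral_indicator hs, ← integral_indicator hs,
    integral_gaussianReal_eq_integral_smul one_ne_zero, gaussianPDFReal_zero_one]
  congr 1 with x
  by_cases hx : x ∈ s <;> simp [hx, mul_comm]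

lemma integrable_stdphi : Integrable stdphi := by
  simpa using integrable_pow_mul_stdphi 0

lemma integral_Ioi_eq_neg_of_hasDerivAt {F f : ℝ → ℝ} {v : ℝ}
    (hF : ∀ x ∈ Ici v, HasDerivAt F (f x) x) (hf : IntegrableOn f (Ioi v))
    (hlim : Tendsto F atTop (𝓝 0)) : ∫ x in Ioi v, f x = -F v := by
  simpa using integral_Ioi_of_hasDerivAt_of_tendsto' hF hf hlim

noncomputable def normalTail (v : ℝ) : ℝ := ∫ x in Ioi v, stdphi x

lemma normalTail_pos (v : ℝ) : 0 < normalTail v := by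
  rw [normalTail, setIntegral_pos_iff_support_of_nonneg_ae (ae_of_all _ fun x => (stdphi_pos x).le)
    integrable_stdphi.integrableOn, Function.support_eq_univ fun x => (stdphi_pos x).ne',
    univ_inter]
  simp

lemma gaussianReal_Ioi_toReal (v : ℝ) : (gaussianReal 0 1 (Ioi v)).toReal = normalTail v := by
  rw [gaussianReal_apply_eq_integral 0 one_ne_zero, gaussianPDFReal_zero_one,
    ENNReal.toReal_ofReal (setIntegral_nonneg measurableSet_Ioi fun x _ => (stdphi_pos x).le),
    normalTail]

lemma gaussianReal_Ioi_ne_zero (v : ℝ) : gaussianReal 0 1 (Ioi v) ≠ 0 := fun h =>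
  (normalTail_pos v).ne' (by rw [← gaussianReal_Ioi_toReal, h, ENNReal.toReal_zero])

lemma integral_Ioi_mul_stdphi (v : ℝ) : ∫ x in Ioi v, x * stdphi x = stdphi v := by
  have h := integral_Ioi_eq_neg_of_hasDerivAt (v := v) (F := fun y => -stdphi y)
    (f := fun x => x * stdphi x)
    (fun x _ => (hasDerivAt_stdphi x).neg.congr_deriv (by ring))
    (by simpa using (integrable_pow_mul_stdphi 1).integrableOn)
    (by simpa using (tendsto_pow_mul_stdphi_atTop 0).neg)
  simpa using h

lemma integral_Ioi_sq_mul_stdphi (v : ℝ) :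
    ∫ x in Ioi v, x ^ 2 * stdphi x = v * stdphi v + normalTail v := by
  have hint : Integrable fun x => (x ^ 2 - 1) * stdphi x := by
    refine ((integrable_pow_mul_stdphi 2).sub integrable_stdphi).congr (ae_of_all _ fun x => ?_)
    simp only [Pi.sub_apply]
    ring
  have h := integral_Ioi_eq_neg_of_hasDerivAt (F := fun y => -(y * stdphi y))
    (fun x _ => ((hasDerivAt_id x).mul (hasDerivAt_stdphi x)).neg.congr_deriv (by simp; ring))
    (hint.integrableOn (s := Ioi v)) (by simpa using (tendsto_pow_mul_stdphi_atTop 1).neg)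
  rw [normalTail, ← neg_neg (v * stdphi v), ← h,
    ← integral_add hint.integrableOn integrable_stdphi.integrableOn]
  congr 1 with x
  ring

lemma hasDerivAt_millsPoly_mul_stdphi (a b c d : ℝ) {x : ℝ} (hx : x ≠ 0) :
    HasDerivAt (fun y => -((a / y ^ 1 + b / y ^ 3 + c / y ^ 5 + d / y ^ 7) * stdphi y))
      ((a + (a + b) / x ^ 2 + (3 * b + c) / x ^ 4 + (5 * c + d) / x ^ 6 + 7 * d / x ^ 8)
        * stdphi x) x := by
  have hpow (k : ℕ) (e : ℝ) := (hasDerivAt_const x e).div (hasDerivAt_pow k x) (pow_ne_zero k hx)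
  have h := ((((hpow 1 a).add (hpow 3 b)).add (hpow 5 c)).add (hpow 7 d)).mul (hasDerivAt_stdphi x)
  refine h.neg.congr_deriv ?_
  simp only [Pi.add_apply, Pi.div_apply]
  field_simp
  ring

lemma tendsto_millsPoly_mul_stdphi (a b c d : ℝ) :
    Tendsto (fun y => -((a / y ^ 1 + b / y ^ 3 + c / y ^ 5 + d / y ^ 7) * stdphi y)) atTop (𝓝 0) := by
  have hpow (k : ℕ) (e : ℝ) (hk : k ≠ 0) : Tendsto (fun y : ℝ => e / y ^ k) atTop (𝓝 0) := by
    simpa [div_eq_mul_inv] using (tendsto_pow_atTop hk).inv_tendsto_atTop.const_mul e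
  have h := ((((hpow 1 a one_ne_zero).add (hpow 3 b (by norm_num))).add
    (hpow 5 c (by norm_num))).add (hpow 7 d (by norm_num))).mul (tendsto_pow_mul_stdphi_atTop 0)
  simpa using h.neg

lemma integrableOn_Ioi_one_add_div_pow_mul_stdphi {v : ℝ} (hv : 0 < v) (c : ℝ) (k : ℕ) :
    IntegrableOn (fun x => (1 + c / x ^ k) * stdphi x) (Ioi v) := by
  refine (integrable_stdphi.const_mul (1 + |c| / v ^ k)).integrableOn.mono' ?_ ?_
  · exact (((continuousOn_const.div (continuousOn_pow k) fun x hx =>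
      pow_ne_zero k (hv.trans hx).ne').const_add 1).mul
      (by unfold stdphi; fun_prop)).aestronglyMeasurable measurableSet_Ioi
  · filter_upwards [ae_restrict_mem measurableSet_Ioi] with x (hx : v < x)
    rw [norm_mul, Real.norm_of_nonneg (stdphi_pos x).le]
    refine mul_le_mul_of_nonneg_right ?_ (stdphi_pos x).le
    calc ‖1 + c / x ^ k‖ ≤ 1 + |c| / x ^ k := by
          simpa [abs_div, abs_of_pos (hv.trans hx)] using norm_add_le 1 (c / x ^ k)
      _ ≤ 1 + |c| / v ^ k := by gcongr

lemma normalTail_le {v : ℝ} (hv : 0 < v) :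
    normalTail v ≤ (1 / v - 1 / v ^ 3 + 3 / v ^ 5) * stdphi v := by
  have hint := integrableOn_Ioi_one_add_div_pow_mul_stdphi hv 15 6
  have h := integral_Ioi_eq_neg_of_hasDerivAt
    (fun x hx => (hasDerivAt_millsPoly_mul_stdphi 1 (-1) 3 0 (hv.trans_le hx).ne').congr_deriv
      (by ring)) hint (tendsto_millsPoly_mul_stdphi 1 (-1) 3 0)
  calc normalTail v ≤ ∫ x in Ioi v, (1 + 15 / x ^ 6) * stdphi x :=
        setIntegral_mono_on integrable_stdphi.integrableOn hint measurableSet_Ioi fun x hx => by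
          have : 0 ≤ 15 / x ^ 6 * stdphi x := by positivity [(stdphi_pos x).le]
          linarith
    _ = (1 / v - 1 / v ^ 3 + 3 / v ^ 5) * stdphi v := by rw [h]; ring

lemma le_normalTail {v : ℝ} (hv : 0 < v) :
    (1 / v - 1 / v ^ 3 + 3 / v ^ 5 - 15 / v ^ 7) * stdphi v ≤ normalTail v := by
  have hint := integrableOn_Ioi_one_add_div_pow_mul_stdphi hv (-105) 8
  have h := integral_Ioi_eq_neg_of_hasDerivAt
    (fun x hx => (hasDerivAt_millsPoly_mul_stdphi 1 (-1) 3 (-15) (hv.trans_le hx).ne').congr_deriv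
      (by ring)) hint (tendsto_millsPoly_mul_stdphi 1 (-1) 3 (-15))
  calc (1 / v - 1 / v ^ 3 + 3 / v ^ 5 - 15 / v ^ 7) * stdphi v
        = ∫ x in Ioi v, (1 + -105 / x ^ 8) * stdphi x := by rw [h]; ring
    _ ≤ normalTail v :=
        setIntegral_mono_on hint integrable_stdphi.integrableOn measurableSet_Ioi fun x hx => by
          have : 0 ≤ 105 / x ^ 8 * stdphi x := by positivity [(stdphi_pos x).le]
          linarith [show (1 + -105 / x ^ 8) * stdphi x = stdphi x - 105 / x ^ 8 * stdphi x by ring]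

-- Defined so that `Q v / φ v = 1 / v - 1 / v ^ 3 + millsRemainder v / v ^ 5`.
noncomputable def millsRemainder (v : ℝ) : ℝ :=
  v ^ 4 * (v * normalTail v / stdphi v - 1 + 1 / v ^ 2)

lemma millsRemainder_mem_Icc {v : ℝ} (hv : 0 < v) :
    millsRemainder v ∈ Icc (3 - 15 / v ^ 2) 3 := by
  have hφ := stdphi_pos v
  have hup : v * normalTail v / stdphi v ≤ 1 - 1 / v ^ 2 + 3 / v ^ 4 := by
    rw [div_le_iff₀ hφ]
    calc v * normalTail v ≤ v * ((1 / v - 1 / v ^ 3 + 3 / v ^ 5) * stdphi v) := by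
          gcongr; exact normalTail_le hv
      _ = (1 - 1 / v ^ 2 + 3 / v ^ 4) * stdphi v := by field_simp
  have hlow : 1 - 1 / v ^ 2 + 3 / v ^ 4 - 15 / v ^ 6 ≤ v * normalTail v / stdphi v := by
    rw [le_div_iff₀ hφ]
    calc (1 - 1 / v ^ 2 + 3 / v ^ 4 - 15 / v ^ 6) * stdphi v
        = v * ((1 / v - 1 / v ^ 3 + 3 / v ^ 5 - 15 / v ^ 7) * stdphi v) := by field_simp
      _ ≤ v * normalTail v := by gcongr; exact le_normalTail hv
  constructor
  · calc 3 - 15 / v ^ 2 = v ^ 4 * (3 / v ^ 4 - 15 / v ^ 6) := by field_simp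
      _ ≤ millsRemainder v := by rw [millsRemainder]; gcongr; linarith
  · calc millsRemainder v ≤ v ^ 4 * (3 / v ^ 4) := by rw [millsRemainder]; gcongr; linarith
      _ = 3 := by field_simp

lemma tendsto_millsRemainder : Tendsto millsRemainder atTop (𝓝 3) := by
  have h : Tendsto (fun v : ℝ => 3 - 15 / v ^ 2) atTop (𝓝 3) := by
    simpa [div_eq_mul_inv] using
      ((tendsto_pow_atTop (α := ℝ) two_ne_zero).inv_tendsto_atTop.const_mul 15).const_sub 3
  refine tendsto_of_tendsto_of_tendsto_of_le_of_le' h tendsto_const_nhds ?_ ?_ <;>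
  filter_upwards [eventually_gt_atTop 0] with v hv
  exacts [(millsRemainder_mem_Icc hv).1, (millsRemainder_mem_Icc hv).2]

lemma cVar_gaussianReal_Ioi (v : ℝ) :
    cVar (gaussianReal 0 1) (Ioi v) id
      = (v * stdphi v + normalTail v) / normalTail v - (stdphi v / normalTail v) ^ 2 := by
  simp only [cVar, cExp, setIntegral_gaussianReal_zero_one measurableSet_Ioi, id,
    integral_Ioi_sq_mul_stdphi, integral_Ioi_mul_stdphi, gaussianReal_Ioi_toReal]

lemma tendsto_sq_mul_cVar_gaussianReal_Ioi :
    Tendsto (fun v => v ^ 2 * cVar (gaussianReal 0 1) (Ioi v) id) atTop (𝓝 1) := by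
  -- With `x = 1 / v ^ 2` and `w = millsRemainder v` one has `v Q / φ = 1 - x + w x²`,
  -- and `v ^ 2 * s v = F (x, w)`.
  set F : ℝ × ℝ → ℝ := fun p =>
    (p.2 - 2 + (2 * p.2 + 1) * p.1 - 2 * p.2 * p.1 ^ 2 + p.2 ^ 2 * p.1 ^ 3) /
      (1 - p.1 + p.2 * p.1 ^ 2) ^ 2 with hF
  have hFc : ContinuousAt F (0, 3) := by
    rw [hF]; fun_prop (disch := norm_num)
  have hx : Tendsto (fun v : ℝ => 1 / v ^ 2) atTop (𝓝 0) := by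
    simpa only [one_div, Function.comp_def] using
      tendsto_inv_atTop_zero.comp (tendsto_pow_atTop (α := ℝ) two_ne_zero)
  have h := hFc.tendsto.comp (hx.prodMk_nhds tendsto_millsRemainder)
  rw [show F (0, 3) = 1 by norm_num [hF]] at h
  refine h.congr' ?_
  filter_upwards [eventually_gt_atTop 0] with v hv
  have hv0 := hv.ne'
  have hφ := (stdphi_pos v).ne'
  have hQ := (normalTail_pos v).ne'
  have ht : 1 - 1 / v ^ 2 + millsRemainder v * (1 / v ^ 2) ^ 2 = v * normalTail v / stdphi v := by
    rw [millsRemainder]; field_simp; ring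
  simp only [Function.comp, hF, ht, cVar_gaussianReal_Ioi]
  rw [millsRemainder]
  field_simp
  ring

section ConditionalMoments

variable {Ω : Type*} [MeasurableSpace Ω] {P : Measure Ω}

lemma cExp_add {A : Set Ω} {f g : Ω → ℝ} (hf : IntegrableOn f A P) (hg : IntegrableOn g A P) :
    cExp P A (fun ω => f ω + g ω) = cExp P A f + cExp P A g := by
  rw [cExp, cExp, cExp, integral_add hf hg, add_div]

lemma cExp_const_mul (A : Set Ω) (c : ℝ) (f : Ω → ℝ) :
    cExp P A (fun ω => c * f ω) = c * cExp P A f := by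
  rw [cExp, cExp, integral_const_mul, mul_div_assoc]

lemma cExp_one [IsFiniteMeasure P] {A : Set Ω} (hA : P A ≠ 0) : cExp P A (fun _ => 1) = 1 := by
  rw [cExp, setIntegral_const, smul_eq_mul, mul_one, measureReal_def]
  exact div_self (ENNReal.toReal_ne_zero.2 ⟨hA, measure_ne_top P A⟩)

lemma cExp_comp {α : Type*} [MeasurableSpace α] {Y : Ω → α} (hY : AEMeasurable Y P) {S : Set α}
    (hS : MeasurableSet S) {h : α → ℝ} (hh : AEStronglyMeasurable h (P.map Y)) :
    cExp P (Y ⁻¹' S) (fun ω => h (Y ω)) = cExp (P.map Y) S h := by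
  rw [cExp, cExp, setIntegral_map hS hh hY, Measure.map_apply_of_aemeasurable hY hS]

lemma cVar_eq_cVar_map {Y : Ω → ℝ} (hY : AEMeasurable Y P) {S : Set ℝ} (hS : MeasurableSet S) :
    cVar P (Y ⁻¹' S) Y = cVar (P.map Y) S id := by
  rw [cVar, cVar, ← cExp_comp hY hS (by fun_prop), ← cExp_comp hY hS (by fun_prop)]
  rfl

lemma cExp_preimage_mul_of_indepFun {Y Z : Ω → ℝ} (hind : IndepFun Y Z P) (hY : Measurable Y)
    (hZ : Measurable Z) {S : Set ℝ} (hS : MeasurableSet S) {u w : ℝ → ℝ} (hu : Measurable u)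
    (hw : Measurable w) :
    cExp P (Y ⁻¹' S) (fun ω => u (Y ω) * w (Z ω))
      = cExp P (Y ⁻¹' S) (fun ω => u (Y ω)) * ∫ ω, w (Z ω) ∂P := by
  have h := (hind.comp (hu.indicator hS) hw).integral_mul_eq_mul_integral
    ((hu.indicator hS).comp hY).aestronglyMeasurable (hw.comp hZ).aestronglyMeasurable
  have hind_eq : (Y ⁻¹' S).indicator (fun ω => u (Y ω) * w (Z ω))
      = fun ω => S.indicator u (Y ω) * w (Z ω) := by
    ext ω
    by_cases hω : Y ω ∈ S <;> simp [hω]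
  rw [cExp, cExp, ← integral_indicator (hY hS), ← integral_indicator (hY hS), hind_eq,
    div_mul_eq_mul_div]
  exact congrArg (· / (P (Y ⁻¹' S)).toReal) h

lemma cExp_preimage_mul_eq_zero_of_indepFun {Y Z : Ω → ℝ} (hind : IndepFun Y Z P)
    (hY : Measurable Y) (hZ : Measurable Z) {S : Set ℝ} (hS : MeasurableSet S) {u : ℝ → ℝ}
    (hu : Measurable u) (hZ0 : ∫ ω, Z ω ∂P = 0) :
    cExp P (Y ⁻¹' S) (fun ω => u (Y ω) * Z ω) = 0 := by
  simpa [hZ0] using cExp_preimage_mul_of_indepFun (w := id) hind hY hZ hS hu measurable_id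

variable [IsFiniteMeasure P] {Y Z : Ω → ℝ} {S : Set ℝ}

lemma cCov_add_of_indepFun (hind : IndepFun Y Z P) (hY : Measurable Y) (hZ : Measurable Z)
    (hS : MeasurableSet S) (hY2 : MemLp Y 2 P) (hZ2 : MemLp Z 2 P) (hZ0 : ∫ ω, Z ω ∂P = 0)
    (a b : ℝ) :
    cCov P (Y ⁻¹' S) (fun ω => a * Y ω + b * Z ω) Y = a * cVar P (Y ⁻¹' S) Y := by
  have hYi := hY2.integrable one_le_two
  have hZi := hZ2.integrable one_le_two
  have hY2i := hY2.integrable_sq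
  have hYZi : Integrable (fun ω => Y ω * Z ω) P := hY2.integrable_mul hZ2
  have hEZ : cExp P (Y ⁻¹' S) Z = 0 := by
    simpa using cExp_preimage_mul_eq_zero_of_indepFun (u := fun _ => 1) hind hY hZ hS
      measurable_const hZ0
  have hEYZ : cExp P (Y ⁻¹' S) (fun ω => Y ω * Z ω) = 0 :=
    cExp_preimage_mul_eq_zero_of_indepFun hind hY hZ hS measurable_id hZ0
  have hXY : (fun ω => (a * Y ω + b * Z ω) * Y ω) = fun ω => a * Y ω ^ 2 + b * (Y ω * Z ω) := by
    ext ω; ring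
  rw [cCov, cVar, hXY, cExp_add, cExp_add, cExp_const_mul, cExp_const_mul, cExp_const_mul,
    cExp_const_mul, hEZ, hEYZ]
  · ring
  all_goals exact Integrable.integrableOn (by fun_prop)

lemma cVar_add_of_indepFun (hind : IndepFun Y Z P) (hY : Measurable Y) (hZ : Measurable Z)
    (hS : MeasurableSet S) (hA : P (Y ⁻¹' S) ≠ 0) (hY2 : MemLp Y 2 P) (hZ2 : MemLp Z 2 P)
    (hZ0 : ∫ ω, Z ω ∂P = 0) (hZ1 : ∫ ω, Z ω ^ 2 ∂P = 1) (a b : ℝ) :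
    cVar P (Y ⁻¹' S) (fun ω => a * Y ω + b * Z ω) = a ^ 2 * cVar P (Y ⁻¹' S) Y + b ^ 2 := by
  have hYi := hY2.integrable one_le_two
  have hZi := hZ2.integrable one_le_two
  have hY2i := hY2.integrable_sq
  have hZ2i := hZ2.integrable_sq
  have hYZi : Integrable (fun ω => Y ω * Z ω) P := hY2.integrable_mul hZ2
  have hEZ : cExp P (Y ⁻¹' S) Z = 0 := by
    simpa using cExp_preimage_mul_eq_zero_of_indepFun (u := fun _ => 1) hind hY hZ hS
      measurable_const hZ0
  have hEYZ : cExp P (Y ⁻¹' S) (fun ω => Y ω * Z ω) = 0 :=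
    cExp_preimage_mul_eq_zero_of_indepFun hind hY hZ hS measurable_id hZ0
  have hEZ2 : cExp P (Y ⁻¹' S) (fun ω => Z ω ^ 2) = 1 := by
    have h := cExp_preimage_mul_of_indepFun (u := fun _ => 1)
      (w := fun z => z ^ 2) hind hY hZ hS measurable_const (measurable_id.pow_const 2)
    simp only [one_mul] at h
    rw [h, cExp_one hA, hZ1, one_mul]
  have hX2 : (fun ω => (a * Y ω + b * Z ω) ^ 2)
      = fun ω => a ^ 2 * Y ω ^ 2 + (2 * a * b * (Y ω * Z ω) + b ^ 2 * Z ω ^ 2) := by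
    ext ω; ring
  rw [cVar, cVar, hX2, cExp_add, cExp_add, cExp_add, cExp_const_mul, cExp_const_mul,
    cExp_const_mul, cExp_const_mul, cExp_const_mul, hEZ, hEYZ, hEZ2]
  · ring
  all_goals exact Integrable.integrableOn (by fun_prop)

lemma cCorr_add_of_indepFun (hind : IndepFun Y Z P) (hY : Measurable Y) (hZ : Measurable Z)
    (hS : MeasurableSet S) (hA : P (Y ⁻¹' S) ≠ 0) (hY2 : MemLp Y 2 P) (hZ2 : MemLp Z 2 P)
    (hZ0 : ∫ ω, Z ω ∂P = 0) (hZ1 : ∫ ω, Z ω ^ 2 ∂P = 1) (a b : ℝ) :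
    cCorr P (Y ⁻¹' S) (fun ω => a * Y ω + b * Z ω) Y
      = a * cVar P (Y ⁻¹' S) Y / √((a ^ 2 * cVar P (Y ⁻¹' S) Y + b ^ 2) * cVar P (Y ⁻¹' S) Y) := by
  rw [cCorr, cCov_add_of_indepFun hind hY hZ hS hY2 hZ2 hZ0,
    cVar_add_of_indepFun hind hY hZ hS hA hY2 hZ2 hZ0 hZ1]

end ConditionalMoments

lemma tendsto_mul_div_sqrt_of_tendsto_sq_mul {s : ℝ → ℝ}
    (hs : Tendsto (fun v => v ^ 2 * s v) atTop (𝓝 1)) (a : ℝ) {k : ℝ} (hk : 0 < k) :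
    Tendsto (fun v => v * (a * s v / √((a ^ 2 * s v + k) * s v))) atTop (𝓝 (a / √k)) := by
  have hs0 : Tendsto s atTop (𝓝 0) := by
    have h := hs.mul (tendsto_inv_atTop_zero.comp (tendsto_pow_atTop (α := ℝ) two_ne_zero))
    rw [mul_zero] at h
    refine h.congr' ?_
    filter_upwards [eventually_ne_atTop 0] with v hv
    simp only [Function.comp_apply]
    field_simp
  have hnum : Tendsto (fun v => a * √(v ^ 2 * s v)) atTop (𝓝 a) := by
    simpa using (Real.continuous_sqrt.tendsto 1 |>.comp hs).const_mul a
  have hden : Tendsto (fun v => √(a ^ 2 * s v + k)) atTop (𝓝 √k) := by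
    have h : Tendsto (fun v => a ^ 2 * s v + k) atTop (𝓝 k) := by
      simpa using (hs0.const_mul (a ^ 2)).add_const k
    exact (Real.continuous_sqrt.tendsto k).comp h
  refine (hnum.div hden (Real.sqrt_pos.2 hk).ne').congr' ?_
  filter_upwards [eventually_gt_atTop 0, hs.eventually (eventually_gt_nhds one_pos)]
    with v hv hvs
  have hsv : 0 < s v := pos_of_mul_pos_right hvs (sq_nonneg v)
  have hd : 0 < a ^ 2 * s v + k := by positivity
  rw [Pi.div_apply, Real.sqrt_mul (sq_nonneg v), Real.sqrt_sq hv.le, Real.sqrt_mul hd.le]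
  calc a * (v * √(s v)) / √(a ^ 2 * s v + k)
      = v * (a * (s v / √(s v)) / √(a ^ 2 * s v + k)) := by rw [Real.div_sqrt]; ring
    _ = v * (a * s v / (√(a ^ 2 * s v + k) * √(s v))) := by ring

lemma memLp_of_map_eq_gaussianReal {Ω : Type*} [MeasurableSpace Ω] {P : Measure Ω}
    {Z : Ω → ℝ} (hZ : AEMeasurable Z P) {m : ℝ} {σ2 : ℝ≥0}
    (hlaw : P.map Z = gaussianReal m σ2) (p : ℝ≥0) : MemLp Z p P :=
  (memLp_map_measure_iff aestronglyMeasurable_id hZ).1 (hlaw ▸ memLp_id_gaussianReal p)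

lemma integral_sq_of_map_eq_gaussianReal {Ω : Type*} [MeasurableSpace Ω] {P : Measure Ω}
    {Z : Ω → ℝ} (hZ : AEMeasurable Z P) {σ2 : ℝ≥0} (hlaw : P.map Z = gaussianReal 0 σ2) :
    ∫ ω, Z ω ^ 2 ∂P = σ2 := by
  have hZlaw : HasLaw Z (gaussianReal 0 σ2) P := ⟨hZ, hlaw⟩
  rw [← variance_of_integral_eq_zero hZ (by rw [hZlaw.integral_eq, integral_id_gaussianReal]),
    hZlaw.variance_eq, variance_id_gaussianReal]

theorem stmt5 {Ω : Type*} [MeasurableSpace Ω] (P : Measure Ω) [IsProbabilityMeasure P]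
    (Y Z : Ω → ℝ) (hY : Measurable Y) (hZ : Measurable Z)
    (hYlaw : Measure.map Y P = gaussianReal 0 1) (hZlaw : Measure.map Z P = gaussianReal 0 1)
    (hind : IndepFun Y Z P)
    (ρ : ℝ) (hρ : ρ ∈ Set.Ioo (0 : ℝ) 1)
    (X : Ω → ℝ) (hX : X = fun ω => ρ * Y ω + Real.sqrt (1 - ρ ^ 2) * Z ω) :
    Tendsto (fun v : ℝ => v * cCorr P {ω | Y ω > v} X Y) atTop
        (nhds (ρ / Real.sqrt (1 - ρ ^ 2))) ∧
      Tendsto (fun v : ℝ => cCorr P {ω | Y ω > v} X Y) atTop (nhds 0) := by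
  have hk : 0 < 1 - ρ ^ 2 := by nlinarith [hρ.1, hρ.2]
  have hY2 : MemLp Y 2 P := memLp_of_map_eq_gaussianReal hY.aemeasurable hYlaw 2
  have hZ2 : MemLp Z 2 P := memLp_of_map_eq_gaussianReal hZ.aemeasurable hZlaw 2
  have hZ0 : ∫ ω, Z ω ∂P = 0 := by
    rw [(HasLaw.mk hZ.aemeasurable hZlaw).integral_eq, integral_id_gaussianReal]
  have hZ1 : ∫ ω, Z ω ^ 2 ∂P = 1 := by
    simpa using integral_sq_of_map_eq_gaussianReal hZ.aemeasurable hZlaw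
  have hcorr (v : ℝ) : cCorr P {ω | Y ω > v} X Y
      = ρ * cVar (gaussianReal 0 1) (Ioi v) id
        / √((ρ ^ 2 * cVar (gaussianReal 0 1) (Ioi v) id + (1 - ρ ^ 2))
          * cVar (gaussianReal 0 1) (Ioi v) id) := by
    have hA : P (Y ⁻¹' Ioi v) ≠ 0 := by
      rw [← Measure.map_apply hY measurableSet_Ioi, hYlaw]
      exact gaussianReal_Ioi_ne_zero v
    rw [show {ω | Y ω > v} = Y ⁻¹' Ioi v from rfl, hX,
      cCorr_add_of_indepFun hind hY hZ measurableSet_Ioi hA hY2 hZ2 hZ0 hZ1,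
      cVar_eq_cVar_map hY.aemeasurable measurableSet_Ioi, hYlaw, Real.sq_sqrt hk.le]
  have hmain : Tendsto (fun v : ℝ => v * cCorr P {ω | Y ω > v} X Y) atTop
      (𝓝 (ρ / √(1 - ρ ^ 2))) := by
    simpa only [hcorr] using
      tendsto_mul_div_sqrt_of_tendsto_sq_mul tendsto_sq_mul_cVar_gaussianReal_Ioi ρ hk
  refine ⟨hmain, (hmain.div_atTop tendsto_id).congr' ?_⟩
  filter_upwards [eventually_ne_atTop 0] with v hv
  simp [hv]
end

section
/- For a bivariate Gaussian pair (X,Y) with zero means, unit variances and correlation ρ ∈ (−1,1), the bivariate survival function satisfies L(u,u;ρ) ~ ((1+ρ)²/(2π√(1−ρ²)))·exp(−u²/(1+ρ))/u² as u → ∞. -/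
/-!
Substituting `x = u + s`, `y = u + t` and completing the square turns the exponent into
`u²/(1+ρ) + c(s+t) + (s² - 2ρst + t²)/(2(1-ρ²))` with `c = u/(1+ρ)`. Hence the double integral is
`exp(-u²/(1+ρ))` times `∫∫_{s,t>0} exp(-c(s+t)) q(s,t)`, where `|q(s,t) - 1| ≤ (s²+t²)/(1-ρ²)`.
The weight `exp(-c(s+t))` has total mass `c⁻²` and second moments `O(c⁻⁴)`, so this Laplace-type
integral is `c⁻²(1 + O(c⁻²))`, which is the claimed asymptotics.
-/

open MeasureTheory Filter Real Set
open scoped Nat Topology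

theorem integral_Ioi_eq_integral_Ioi_zero_add {E : Type*} [NormedAddCommGroup E] [NormedSpace ℝ E]
    (f : ℝ → E) (a : ℝ) : ∫ x in Ioi a, f x = ∫ s in Ioi 0, f (s + a) := by
  simpa [preimage_add_const_Ioi] using
    ((measurePreserving_add_right volume a).setIntegral_preimage_emb
      (measurableEmbedding_addRight a) f (Ioi a)).symm

theorem integral_pow_mul_exp_neg_mul_Ioi (n : ℕ) {r : ℝ} (hr : 0 < r) :
    ∫ t in Ioi 0, t ^ n * exp (-(r * t)) = n ! / r ^ (n + 1) := by
  have h := integral_rpow_mul_exp_neg_mul_Ioi (a := n + 1) (by positivity) hr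
  rw [Gamma_nat_eq_factorial, ← Nat.cast_add_one, rpow_natCast] at h
  simp only [Nat.cast_add_one, add_sub_cancel_right, rpow_natCast] at h
  rw [h, one_div_pow, one_div_mul_eq_div]

theorem integrableOn_pow_mul_exp_neg_mul_Ioi (n : ℕ) {r : ℝ} (hr : 0 < r) :
    IntegrableOn (fun t => t ^ n * exp (-(r * t))) (Ioi 0) := by
  simpa [rpow_natCast, neg_mul] using
    integrableOn_rpow_mul_exp_neg_mul_rpow (s := n) (p := 1)
      (by linarith [n.cast_nonneg (α := ℝ)]) one_pos hr

theorem integral_exp_neg_mul_Ioi {r : ℝ} (hr : 0 < r) : ∫ t in Ioi 0, exp (-(r * t)) = 1 / r := by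
  simpa using integral_pow_mul_exp_neg_mul_Ioi 0 hr

theorem integrableOn_exp_neg_mul_Ioi {r : ℝ} (hr : 0 < r) :
    IntegrableOn (fun t => exp (-(r * t))) (Ioi 0) := by
  simpa using integrableOn_pow_mul_exp_neg_mul_Ioi 0 hr

section Laplace

variable {q : ℝ → ℝ → ℝ} {k c : ℝ}

theorem integrable_sq_add_sq_mul_exp_neg_mul_prod_Ioi (hc : 0 < c) :
    Integrable (fun z : ℝ × ℝ => (z.1 ^ 2 + z.2 ^ 2) * (exp (-(c * z.1)) * exp (-(c * z.2))))
        ((volume.restrict (Ioi 0)).prod (volume.restrict (Ioi 0))) ∧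
      ∫ z, (z.1 ^ 2 + z.2 ^ 2) * (exp (-(c * z.1)) * exp (-(c * z.2)))
        ∂(volume.restrict (Ioi 0)).prod (volume.restrict (Ioi 0)) = 4 / c ^ 4 := by
  have he := integrableOn_exp_neg_mul_Ioi hc
  have he₂ := integrableOn_pow_mul_exp_neg_mul_Ioi 2 hc
  have hsplit : (fun z : ℝ × ℝ => (z.1 ^ 2 + z.2 ^ 2) * (exp (-(c * z.1)) * exp (-(c * z.2)))) =
      fun z => z.1 ^ 2 * exp (-(c * z.1)) * exp (-(c * z.2)) +
        exp (-(c * z.1)) * (z.2 ^ 2 * exp (-(c * z.2))) := by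
    ext z; ring
  rw [hsplit, integral_add (he₂.mul_prod he) (he.mul_prod he₂),
    integral_prod_mul (fun t => t ^ 2 * exp (-(c * t))) (fun t => exp (-(c * t))),
    integral_prod_mul (fun t => exp (-(c * t))) (fun t => t ^ 2 * exp (-(c * t))),
    integral_pow_mul_exp_neg_mul_Ioi 2 hc]
  refine ⟨(he₂.mul_prod he).add (he.mul_prod he₂), ?_⟩
  rw [integral_exp_neg_mul_Ioi hc]
  field_simp
  ring

theorem abs_sq_mul_integral_exp_neg_mul_add_sub_one_le (hq : Measurable (Function.uncurry q))
    (hqk : ∀ s t, 0 < s → 0 < t → |q s t - 1| ≤ k * (s ^ 2 + t ^ 2)) (hc : 0 < c) :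
    |c ^ 2 * (∫ s in Ioi 0, ∫ t in Ioi 0, exp (-(c * (s + t))) * q s t) - 1| ≤ 4 * k / c ^ 2 := by
  set μ := (volume.restrict (Ioi (0 : ℝ))).prod (volume.restrict (Ioi (0 : ℝ)))
  set w : ℝ × ℝ → ℝ := fun z => exp (-(c * z.1)) * exp (-(c * z.2))
  obtain ⟨hm, hm_int⟩ := integrable_sq_add_sq_mul_exp_neg_mul_prod_Ioi hc
  have hw : Integrable w μ :=
    (integrableOn_exp_neg_mul_Ioi hc).mul_prod (integrableOn_exp_neg_mul_Ioi hc)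
  have hw_int : ∫ z, w z ∂μ = 1 / c ^ 2 := by
    rw [integral_prod_mul (fun t => exp (-(c * t))) (fun t => exp (-(c * t))),
      integral_exp_neg_mul_Ioi hc]
    ring
  have hbound : ∀ᵐ z ∂μ, ‖w z * q z.1 z.2 - w z‖ ≤ k * ((z.1 ^ 2 + z.2 ^ 2) * w z) := by
    rw [show μ = (volume.prod volume).restrict (Ioi 0 ×ˢ Ioi 0) from Measure.prod_restrict ..]
    filter_upwards [ae_restrict_mem (measurableSet_Ioi.prod measurableSet_Ioi)] with z ⟨hs, ht⟩
    have hw_pos : 0 < w z := by positivity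
    calc ‖w z * q z.1 z.2 - w z‖ = w z * |q z.1 z.2 - 1| := by
          rw [Real.norm_eq_abs, ← mul_sub_one, abs_mul, abs_of_pos hw_pos]
      _ ≤ w z * (k * (z.1 ^ 2 + z.2 ^ 2)) := by gcongr; exact hqk _ _ hs ht
      _ = k * ((z.1 ^ 2 + z.2 ^ 2) * w z) := by ring
  have hdiff : Integrable (fun z => w z * q z.1 z.2 - w z) μ :=
    (hm.const_mul k).mono' (by fun_prop) hbound
  have hiter : ∫ s in Ioi 0, ∫ t in Ioi 0, exp (-(c * (s + t))) * q s t =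
      ∫ z, (w z * q z.1 z.2 - w z) ∂μ + 1 / c ^ 2 := by
    have hwq : Integrable (fun z => w z * q z.1 z.2) μ := by
      simpa only [Pi.add_def, sub_add_cancel] using hdiff.add hw
    rw [← hw_int, ← integral_add hdiff hw]
    simp only [sub_add_cancel]
    rw [integral_prod _ hwq]
    simp only [w, mul_add, neg_add, exp_add]
  have hdiff_le : |∫ z, (w z * q z.1 z.2 - w z) ∂μ| ≤ k * (4 / c ^ 4) := by
    rw [← hm_int, ← integral_const_mul]
    exact norm_integral_le_of_norm_le (hm.const_mul k) hbound
  rw [hiter, mul_add, mul_one_div_cancel (by positivity), add_sub_cancel_right, abs_mul,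
    abs_of_pos (by positivity)]
  calc _ ≤ c ^ 2 * (k * (4 / c ^ 4)) := by gcongr
    _ = 4 * k / c ^ 2 := by field_simp

theorem tendsto_sq_mul_integral_exp_neg_mul_add (hq : Measurable (Function.uncurry q))
    (hqk : ∀ s t, 0 < s → 0 < t → |q s t - 1| ≤ k * (s ^ 2 + t ^ 2)) :
    Tendsto (fun c => c ^ 2 * ∫ s in Ioi 0, ∫ t in Ioi 0, exp (-(c * (s + t))) * q s t)
      atTop (𝓝 1) := by
  rw [tendsto_iff_norm_sub_tendsto_zero]
  refine squeeze_zero' (.of_forall fun _ => norm_nonneg _) ?_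
    ((tendsto_pow_atTop two_ne_zero).const_div_atTop (4 * k))
  filter_upwards [eventually_gt_atTop 0] with c hc
  exact abs_sq_mul_integral_exp_neg_mul_add_sub_one_le hq hqk hc

end Laplace

theorem bivariate_exponent_add_const {ρ : ℝ} (hρ : 1 - ρ ^ 2 ≠ 0) (u s t : ℝ) :
    -((s + u) ^ 2 - 2 * ρ * (s + u) * (t + u) + (t + u) ^ 2) / (2 * (1 - ρ ^ 2)) =
      -u ^ 2 / (1 + ρ) + (-(u / (1 + ρ) * (s + t)) +
        -(s ^ 2 - 2 * ρ * s * t + t ^ 2) / (2 * (1 - ρ ^ 2))) := by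
  have h₁ : 1 + ρ ≠ 0 := fun h => hρ (by linear_combination (1 - ρ) * h)
  field_simp
  ring

theorem abs_exp_neg_bivariate_exponent_sub_one_le {ρ : ℝ} (hρ : ρ ∈ Ioo (-1) 1) {s t : ℝ}
    (hs : 0 ≤ s) (ht : 0 ≤ t) :
    |exp (-(s ^ 2 - 2 * ρ * s * t + t ^ 2) / (2 * (1 - ρ ^ 2))) - 1| ≤
      (1 - ρ ^ 2)⁻¹ * (s ^ 2 + t ^ 2) := by
  obtain ⟨h₁, h₂⟩ := hρ
  have hd : 0 < 1 - ρ ^ 2 := by nlinarith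
  set w := (s ^ 2 - 2 * ρ * s * t + t ^ 2) / (2 * (1 - ρ ^ 2))
  have hw₀ : 0 ≤ w := div_nonneg (by nlinarith [sq_nonneg (s - ρ * t)]) (by positivity)
  have hw₁ : w ≤ (1 - ρ ^ 2)⁻¹ * (s ^ 2 + t ^ 2) := by
    rw [div_le_iff₀ (by positivity), inv_mul_eq_div, div_mul_eq_mul_div, le_div_iff₀ hd]
    have : 0 ≤ s ^ 2 + t ^ 2 + 2 * ρ * s * t := by nlinarith [mul_nonneg hs ht, sq_nonneg (s - t)]
    nlinarith [mul_nonneg hd.le this]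
  rw [neg_div, abs_sub_comm, abs_of_nonneg (sub_nonneg.2 (exp_le_one_iff.2 (neg_nonpos.2 hw₀)))]
  linarith [one_sub_le_exp_neg w]

theorem integral_Ioi_Ioi_exp_bivariate_exponent {ρ : ℝ} (hρ : 1 - ρ ^ 2 ≠ 0) (u : ℝ) :
    ∫ x in Ioi u, ∫ y in Ioi u, exp (-(x ^ 2 - 2 * ρ * x * y + y ^ 2) / (2 * (1 - ρ ^ 2))) =
      exp (-u ^ 2 / (1 + ρ)) * ∫ s in Ioi 0, ∫ t in Ioi 0,
        exp (-(u / (1 + ρ) * (s + t))) *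
          exp (-(s ^ 2 - 2 * ρ * s * t + t ^ 2) / (2 * (1 - ρ ^ 2))) := by
  rw [integral_Ioi_eq_integral_Ioi_zero_add, ← integral_const_mul]
  refine setIntegral_congr_fun measurableSet_Ioi fun s _ => ?_
  rw [integral_Ioi_eq_integral_Ioi_zero_add, ← integral_const_mul]
  refine setIntegral_congr_fun measurableSet_Ioi fun t _ => ?_
  rw [bivariate_exponent_add_const hρ, exp_add, exp_add, mul_assoc]

theorem stmt9 (ρ : ℝ) (hρ : ρ ∈ Set.Ioo (-1 : ℝ) 1) :
    Tendsto (fun u : ℝ =>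
        ((2 * Real.pi * Real.sqrt (1 - ρ ^ 2))⁻¹ *
            ∫ x in Set.Ioi u, ∫ y in Set.Ioi u,
              Real.exp (-(x ^ 2 - 2 * ρ * x * y + y ^ 2) / (2 * (1 - ρ ^ 2)))) /
          ((1 + ρ) ^ 2 / (2 * Real.pi * Real.sqrt (1 - ρ ^ 2)) *
            (Real.exp (-u ^ 2 / (1 + ρ)) / u ^ 2)))
      atTop (nhds 1) := by
  have h₁ : 0 < 1 + ρ := by linarith [hρ.1]
  have hd : 0 < 1 - ρ ^ 2 := by nlinarith [hρ.1, hρ.2]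
  have hJ := (tendsto_sq_mul_integral_exp_neg_mul_add (by fun_prop)
    fun s t hs ht => abs_exp_neg_bivariate_exponent_sub_one_le hρ hs.le ht.le).comp
    (tendsto_id.atTop_div_const h₁)
  refine hJ.congr' ?_
  filter_upwards [eventually_ne_atTop 0] with u hu
  simp only [Function.comp_apply, id, integral_Ioi_Ioi_exp_bivariate_exponent hd.ne']
  generalize (∫ s in Ioi (0 : ℝ), ∫ t in Ioi (0 : ℝ), _ : ℝ) = J
  field_simp
end

section
/- Let U, V be uniform on [0,1] with joint CDF given by a copula C. Then for v̄ ∈ (0,1), the covariance of U and V conditioned on V ≥ v̄ equals (1/(1−v̄))·∫_{v̄}^1∫_0^1 C(u,v) du dv − (1/2)·∫_0^1 C(u,v̄) du − 1/4. -/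
open MeasureTheory ProbabilityTheory Filter Real Set

/-!
Since `V` is uniform, conditioning on `{V ≥ v̄}` differs from conditioning on `{V > v̄}` only by a
null event. The conditional moments come from the layer-cake identity `x y = ∫₀¹ 1{t < x} y dt`
(for `x ∈ [0, 1]`) and Fubini: `∫_{V ≥ v̄} U` and `∫_{V ≥ v̄} U V` become integrals of the joint
survival function `P(U > u, V > v) = 1 - u - v + C(u, v)`. In `∫_{V ≥ v̄} U V` the slice at
height `t ≤ v̄` is `∫_{V ≥ v̄} U` again, while for `t > v̄` it is `∫_{V > t} U`.
-/

theorem Iic_inter_Icc_of_le {α : Type*} [LinearOrder α] {a b x : α} (hx : x ≤ b) :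
    Iic x ∩ Icc a b = Icc a x := by
  ext y; simp only [mem_inter_iff, mem_Iic, mem_Icc]; grind

theorem Ici_inter_Icc_of_le {α : Type*} [LinearOrder α] {a b x : α} (hx : a ≤ x) :
    Ici x ∩ Icc a b = Icc x b := by
  ext y; simp only [mem_inter_iff, mem_Ici, mem_Icc]; grind

theorem Iio_inter_Ioc_of_le {α : Type*} [LinearOrder α] {a b x : α} (hx : x ≤ b) :
    Iio x ∩ Ioc a b = Ioo a x := by
  ext y; simp only [mem_inter_iff, mem_Iio, mem_Ioc, mem_Ioo]; grind

theorem setIntegral_eq_add_of_eqOn_add {β : Type*} [MeasurableSpace β] {μ : Measure β}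
    {s : Set β} {f g h : β → ℝ} (hs : MeasurableSet s) (hf : IntegrableOn f s μ)
    (hg : IntegrableOn g s μ) (hfgh : EqOn f (fun x => g x + h x) s) :
    ∫ x in s, f x ∂μ = (∫ x in s, g x ∂μ) + ∫ x in s, h x ∂μ := by
  have hh : ∫ x in s, h x ∂μ = ∫ x in s, (f x - g x) ∂μ :=
    setIntegral_congr_fun hs fun x hx => by rw [hfgh hx]; ring
  rw [hh, integral_sub hf hg]
  ring

theorem integral_Ioc_const_sub_id {a b : ℝ} (hab : a ≤ b) (c : ℝ) :
    ∫ x in Ioc a b, (c - x) = c * (b - a) - (b ^ 2 - a ^ 2) / 2 := by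
  rw [← intervalIntegral.integral_of_le hab, intervalIntegral.integral_sub
    (Continuous.intervalIntegrable (by fun_prop) _ _)
    (Continuous.intervalIntegrable (by fun_prop) _ _), integral_id]
  simp [mul_comm]

section LayerCake

variable {α : Type*} [MeasurableSpace α] {μ : Measure α} {X Y : α → ℝ} {s : Set α}

theorem integrable_uncurry_indicator_lt [SFinite μ] (hX : Measurable X) (hY : Integrable Y μ) :
    Integrable (Function.uncurry fun ω t => {ω | t < X ω}.indicator Y ω)
      (μ.prod (volume.restrict (Ioc (0 : ℝ) 1))) :=
  (hY.comp_fst _).indicator (measurableSet_lt measurable_snd (hX.comp measurable_fst))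

theorem integrableOn_setIntegral_lt [SFinite μ] (hX : Measurable X) (hY : Integrable Y μ) :
    IntegrableOn (fun t => ∫ ω in {ω | t < X ω}, Y ω ∂μ) (Ioc 0 1) := by
  have hslices := (integrable_uncurry_indicator_lt hX hY).integral_prod_right
  simp only [Function.uncurry_apply_pair] at hslices
  exact hslices.congr (ae_of_all _ fun t =>
    integral_indicator (measurableSet_lt measurable_const hX))

theorem integral_mul_eq_integral_setIntegral_lt [SFinite μ] (hX : Measurable X)
    (hX01 : ∀ᵐ ω ∂μ, X ω ∈ Icc 0 1) (hY : Integrable Y μ) :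
    ∫ ω, X ω * Y ω ∂μ = ∫ t in Ioc 0 1, ∫ ω in {ω | t < X ω}, Y ω ∂μ := by
  have hinner : ∀ᵐ ω ∂μ, ∫ t in Ioc (0 : ℝ) 1, {ω | t < X ω}.indicator Y ω = X ω * Y ω := by
    filter_upwards [hX01] with ω hω
    have hind : (fun t => {ω | t < X ω}.indicator Y ω) = (Iio (X ω)).indicator fun _ => Y ω := by
      ext t; simp [indicator_apply]
    rw [hind, integral_indicator_const _ measurableSet_Iio,
      measureReal_restrict_apply measurableSet_Iio, Iio_inter_Ioc_of_le hω.2,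
      Real.volume_real_Ioo_of_le hω.1, sub_zero, smul_eq_mul]
  rw [← integral_congr_ae hinner, integral_integral_swap (integrable_uncurry_indicator_lt hX hY)]
  exact integral_congr_ae (ae_of_all _ fun t =>
    integral_indicator (measurableSet_lt measurable_const hX))

theorem integrableOn_setIntegral_lt_inter [SFinite μ] (hX : Measurable X)
    (hY : IntegrableOn Y s μ) :
    IntegrableOn (fun t => ∫ ω in {ω | t < X ω} ∩ s, Y ω ∂μ) (Ioc 0 1) := by
  simpa only [Measure.restrict_restrict (measurableSet_lt measurable_const hX)]
    using integrableOn_setIntegral_lt hX hY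

theorem setIntegral_mul_eq_integral_setIntegral_lt_inter [SFinite μ] (hX : Measurable X)
    (hX01 : ∀ᵐ ω ∂μ, X ω ∈ Icc 0 1) (hY : IntegrableOn Y s μ) :
    ∫ ω in s, X ω * Y ω ∂μ = ∫ t in Ioc 0 1, ∫ ω in {ω | t < X ω} ∩ s, Y ω ∂μ := by
  simpa only [Measure.restrict_restrict (measurableSet_lt measurable_const hX)]
    using integral_mul_eq_integral_setIntegral_lt hX (ae_restrict_of_ae hX01) hY

theorem integrableOn_measureReal_lt_inter [IsFiniteMeasure μ] (hX : Measurable X) (s : Set α) :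
    IntegrableOn (fun t => μ.real ({ω | t < X ω} ∩ s)) (Ioc 0 1) := by
  simpa only [setIntegral_const, smul_eq_mul, mul_one]
    using integrableOn_setIntegral_lt_inter hX (integrableOn_const (C := (1 : ℝ)))

theorem setIntegral_eq_integral_measureReal_lt_inter [IsFiniteMeasure μ] (hX : Measurable X)
    (hX01 : ∀ᵐ ω ∂μ, X ω ∈ Icc 0 1) (s : Set α) :
    ∫ ω in s, X ω ∂μ = ∫ t in Ioc 0 1, μ.real ({ω | t < X ω} ∩ s) := by
  simpa only [setIntegral_const, smul_eq_mul, mul_one]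
    using setIntegral_mul_eq_integral_setIntegral_lt_inter hX hX01
      (integrableOn_const (C := (1 : ℝ)))

end LayerCake

section Uniform

variable {Ω : Type*} [MeasurableSpace Ω] {P : Measure Ω} {W : Ω → ℝ}

theorem measure_preimage_of_map_eq_uniform (hW : Measurable W)
    (hunif : P.map W = volume.restrict (Icc 0 1)) {s : Set ℝ} (hs : MeasurableSet s) :
    P (W ⁻¹' s) = volume (s ∩ Icc 0 1) := by
  rw [← Measure.map_apply hW hs, hunif, Measure.restrict_apply hs]

theorem ae_mem_Icc_of_map_eq_uniform (hW : Measurable W)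
    (hunif : P.map W = volume.restrict (Icc 0 1)) : ∀ᵐ ω ∂P, W ω ∈ Icc (0 : ℝ) 1 :=
  ae_of_ae_map hW.aemeasurable (hunif ▸ ae_restrict_mem measurableSet_Icc)

theorem integrable_of_map_eq_uniform [IsFiniteMeasure P] (hW : Measurable W)
    (hunif : P.map W = volume.restrict (Icc 0 1)) : Integrable W P := by
  refine Integrable.of_bound hW.aestronglyMeasurable 1 ?_
  filter_upwards [ae_mem_Icc_of_map_eq_uniform hW hunif] with ω hω
  rw [Real.norm_of_nonneg hω.1]
  exact hω.2

theorem measureReal_le_of_map_eq_uniform (hW : Measurable W)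
    (hunif : P.map W = volume.restrict (Icc 0 1)) {x : ℝ} (hx : x ∈ Icc (0 : ℝ) 1) :
    P.real {ω | W ω ≤ x} = x := by
  rw [measureReal_def, show {ω | W ω ≤ x} = W ⁻¹' Iic x from rfl,
    measure_preimage_of_map_eq_uniform hW hunif measurableSet_Iic, Iic_inter_Icc_of_le hx.2,
    Real.volume_Icc, ENNReal.toReal_ofReal (by linarith [hx.1]), sub_zero]

theorem measureReal_ge_of_map_eq_uniform (hW : Measurable W)
    (hunif : P.map W = volume.restrict (Icc 0 1)) {x : ℝ} (hx : x ∈ Icc (0 : ℝ) 1) :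
    P.real {ω | x ≤ W ω} = 1 - x := by
  rw [measureReal_def, show {ω | x ≤ W ω} = W ⁻¹' Ici x from rfl,
    measure_preimage_of_map_eq_uniform hW hunif measurableSet_Ici, Ici_inter_Icc_of_le hx.1,
    Real.volume_Icc, ENNReal.toReal_ofReal (by linarith [hx.2])]

theorem setIntegral_ge_of_map_eq_uniform (hW : Measurable W)
    (hunif : P.map W = volume.restrict (Icc 0 1)) {x : ℝ} (hx : x ∈ Icc (0 : ℝ) 1) :
    ∫ ω in {ω | x ≤ W ω}, W ω ∂P = (1 - x ^ 2) / 2 := by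
  rw [show {ω | x ≤ W ω} = W ⁻¹' Ici x from rfl,
    ← setIntegral_map (f := fun y => y) measurableSet_Ici aestronglyMeasurable_id
      hW.aemeasurable, hunif, Measure.restrict_restrict measurableSet_Ici,
    Ici_inter_Icc_of_le hx.1, integral_Icc_eq_integral_Ioc,
    ← intervalIntegral.integral_of_le hx.2, integral_id]
  ring

theorem setOf_ge_ae_eq_setOf_gt_of_map_eq_uniform (hW : Measurable W)
    (hunif : P.map W = volume.restrict (Icc 0 1)) (x : ℝ) :
    {ω | x ≤ W ω} =ᵐ[P] {ω | x < W ω} := by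
  have h : Ici x =ᵐ[P.map W] Ioi x := by rw [hunif]; exact Ioi_ae_eq_Ici.symm
  exact (hW.quasiMeasurePreserving P).preimage_ae_eq h

end Uniform

section Copula

variable {Ω : Type*} [MeasurableSpace Ω] {P : Measure Ω} [IsProbabilityMeasure P]
  {U V : Ω → ℝ} {C : ℝ → ℝ → ℝ}

theorem measureReal_lt_inter_lt_eq_copula (hU : Measurable U) (hV : Measurable V)
    (hUuni : P.map U = volume.restrict (Icc 0 1)) (hVuni : P.map V = volume.restrict (Icc 0 1))
    (hC : ∀ u ∈ Icc (0 : ℝ) 1, ∀ v ∈ Icc (0 : ℝ) 1, (P {ω | U ω ≤ u ∧ V ω ≤ v}).toReal = C u v)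
    {u v : ℝ} (hu : u ∈ Icc (0 : ℝ) 1) (hv : v ∈ Icc (0 : ℝ) 1) :
    P.real ({ω | u < U ω} ∩ {ω | v < V ω}) = 1 - u - v + C u v := by
  have hcompl : {ω | u < U ω} ∩ {ω | v < V ω} = ({ω | U ω ≤ u} ∪ {ω | V ω ≤ v})ᶜ := by
    ext ω; simp
  have hmeas : MeasurableSet ({ω | U ω ≤ u} ∪ {ω | V ω ≤ v}) :=
    (hU measurableSet_Iic).union (hV measurableSet_Iic)
  have hincl := measureReal_union_add_inter (μ := P) (s := {ω | U ω ≤ u})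
    (t := {ω | V ω ≤ v}) (hV measurableSet_Iic)
  have hjoint : P.real ({ω | U ω ≤ u} ∩ {ω | V ω ≤ v}) = C u v := hC u hu v hv
  rw [hcompl, probReal_compl_eq_one_sub hmeas]
  linarith [measureReal_le_of_map_eq_uniform hU hUuni hu,
    measureReal_le_of_map_eq_uniform hV hVuni hv]

theorem integral_measureReal_lt_inter_lt_eq_copula (hU : Measurable U) (hV : Measurable V)
    (hUuni : P.map U = volume.restrict (Icc 0 1)) (hVuni : P.map V = volume.restrict (Icc 0 1))
    (hC : ∀ u ∈ Icc (0 : ℝ) 1, ∀ v ∈ Icc (0 : ℝ) 1, (P {ω | U ω ≤ u ∧ V ω ≤ v}).toReal = C u v)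
    {v : ℝ} (hv : v ∈ Icc (0 : ℝ) 1) :
    ∫ u in Ioc 0 1, P.real ({ω | u < U ω} ∩ {ω | v < V ω})
      = 1 / 2 - v + ∫ u in Ioc 0 1, C u v := by
  have hsurv : EqOn (fun u => P.real ({ω | u < U ω} ∩ {ω | v < V ω}))
      (fun u => (1 - v - u) + C u v) (Ioc 0 1) := fun u hu => by
    simp only [measureReal_lt_inter_lt_eq_copula hU hV hUuni hVuni hC ⟨hu.1.le, hu.2⟩ hv]
    ring
  rw [setIntegral_eq_add_of_eqOn_add measurableSet_Ioc (integrableOn_measureReal_lt_inter hU _)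
    (by fun_prop : Continuous fun u : ℝ => 1 - v - u).integrableOn_Ioc hsurv,
    integral_Ioc_const_sub_id zero_le_one]
  ring

theorem setIntegral_ge_eq_copula (hU : Measurable U) (hV : Measurable V)
    (hUuni : P.map U = volume.restrict (Icc 0 1)) (hVuni : P.map V = volume.restrict (Icc 0 1))
    (hC : ∀ u ∈ Icc (0 : ℝ) 1, ∀ v ∈ Icc (0 : ℝ) 1, (P {ω | U ω ≤ u ∧ V ω ≤ v}).toReal = C u v)
    {vb : ℝ} (hvb : vb ∈ Icc (0 : ℝ) 1) :
    ∫ ω in {ω | vb ≤ V ω}, U ω ∂P = 1 / 2 - vb + ∫ u in Ioc 0 1, C u vb := by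
  rw [setIntegral_eq_integral_measureReal_lt_inter hU (ae_mem_Icc_of_map_eq_uniform hU hUuni),
    ← integral_measureReal_lt_inter_lt_eq_copula hU hV hUuni hVuni hC hvb]
  refine setIntegral_congr_fun measurableSet_Ioc fun u _ => measureReal_congr ?_
  exact ae_eq_set_inter (ae_eq_refl _) (setOf_ge_ae_eq_setOf_gt_of_map_eq_uniform hV hVuni vb)

theorem setIntegral_ge_mul_eq_copula (hU : Measurable U) (hV : Measurable V)
    (hUuni : P.map U = volume.restrict (Icc 0 1)) (hVuni : P.map V = volume.restrict (Icc 0 1))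
    (hC : ∀ u ∈ Icc (0 : ℝ) 1, ∀ v ∈ Icc (0 : ℝ) 1, (P {ω | U ω ≤ u ∧ V ω ≤ v}).toReal = C u v)
    {vb : ℝ} (hvb : vb ∈ Icc (0 : ℝ) 1) :
    ∫ ω in {ω | vb ≤ V ω}, U ω * V ω ∂P
      = vb * (1 / 2 - vb + ∫ u in Ioc 0 1, C u vb) - vb * (1 - vb) / 2
        + ∫ v in Ioc vb 1, ∫ u in Ioc 0 1, C u v := by
  set A := {ω | vb ≤ V ω}
  set H : ℝ → ℝ := fun t => ∫ ω in {ω | t < V ω} ∩ A, U ω ∂P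
  have hUA : IntegrableOn U A P := (integrable_of_map_eq_uniform hU hUuni).integrableOn
  have hH : IntegrableOn H (Ioc 0 1) := integrableOn_setIntegral_lt_inter hV hUA
  have hA : A =ᵐ[P] {ω | vb < V ω} := setOf_ge_ae_eq_setOf_gt_of_map_eq_uniform hV hVuni vb
  have hlow : EqOn H (fun _ => ∫ ω in A, U ω ∂P) (Ioc 0 vb) := fun t ht => by
    have hinter : ({ω | t < V ω} ∩ A : Set Ω) =ᵐ[P] ({ω | t < V ω} ∩ {ω | vb < V ω} : Set Ω) :=
      ae_eq_set_inter (ae_eq_refl _) hA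
    have hsub : {ω | t < V ω} ∩ {ω | vb < V ω} = {ω | vb < V ω} :=
      inter_eq_right.2 fun ω (h : vb < V ω) => ht.2.trans_lt h
    simp only [H]
    rw [setIntegral_congr_set hinter, hsub, setIntegral_congr_set hA]
  have hhigh : EqOn H (fun t => (1 / 2 - t) + ∫ u in Ioc 0 1, C u t) (Ioc vb 1) := fun t ht => by
    have hsub : {ω | t < V ω} ∩ A = {ω | t < V ω} :=
      inter_eq_left.2 fun ω (h : t < V ω) => ht.1.le.trans h.le
    simp only [H, hsub,
      setIntegral_eq_integral_measureReal_lt_inter hU (ae_mem_Icc_of_map_eq_uniform hU hUuni),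
      integral_measureReal_lt_inter_lt_eq_copula hU hV hUuni hVuni hC ⟨hvb.1.trans ht.1.le, ht.2⟩]
  have hsplit : ∫ t in Ioc 0 1, H t = (∫ t in Ioc 0 vb, H t) + ∫ t in Ioc vb 1, H t := by
    rw [← Ioc_union_Ioc_eq_Ioc hvb.1 hvb.2]
    exact setIntegral_union (Ioc_disjoint_Ioc_of_le le_rfl) measurableSet_Ioc
      (hH.mono_set (Ioc_subset_Ioc_right hvb.2)) (hH.mono_set (Ioc_subset_Ioc_left hvb.1))
  simp_rw [mul_comm (U _)]
  rw [setIntegral_mul_eq_integral_setIntegral_lt_inter hV (ae_mem_Icc_of_map_eq_uniform hV hVuni)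
      hUA, hsplit, setIntegral_congr_fun measurableSet_Ioc hlow, setIntegral_const,
    setIntegral_eq_add_of_eqOn_add measurableSet_Ioc (hH.mono_set (Ioc_subset_Ioc_left hvb.1))
      (by fun_prop : Continuous fun t : ℝ => 1 / 2 - t).integrableOn_Ioc hhigh,
    integral_Ioc_const_sub_id hvb.2, setIntegral_ge_eq_copula hU hV hUuni hVuni hC hvb,
    Real.volume_real_Ioc_of_le hvb.1, smul_eq_mul]
  ring

end Copula

theorem stmt14 {Ω : Type*} [MeasurableSpace Ω] (P : Measure Ω) [IsProbabilityMeasure P]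
    (U V : Ω → ℝ) (hU : Measurable U) (hV : Measurable V)
    (hUuni : Measure.map U P = volume.restrict (Set.Icc (0 : ℝ) 1))
    (hVuni : Measure.map V P = volume.restrict (Set.Icc (0 : ℝ) 1))
    (C : ℝ → ℝ → ℝ)
    (hC : ∀ u ∈ Set.Icc (0 : ℝ) 1, ∀ v ∈ Set.Icc (0 : ℝ) 1,
      (P {ω | U ω ≤ u ∧ V ω ≤ v}).toReal = C u v)
    (vb : ℝ) (hvb : vb ∈ Set.Ioo (0 : ℝ) 1) :
    cCov P {ω | vb ≤ V ω} U V
      = (1 / (1 - vb)) * (∫ v in Set.Ioc vb 1, ∫ u in Set.Ioc (0 : ℝ) 1, C u v)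
        - (1 / 2) * (∫ u in Set.Ioc (0 : ℝ) 1, C u vb) - 1 / 4 := by
  have hvb' : vb ∈ Icc (0 : ℝ) 1 := ⟨hvb.1.le, hvb.2.le⟩
  have hPA : (P {ω | vb ≤ V ω}).toReal = 1 - vb := measureReal_ge_of_map_eq_uniform hV hVuni hvb'
  have hvb1 : 1 - vb ≠ 0 := sub_ne_zero.2 hvb.2.ne'
  rw [cCov, cExp, cExp, cExp, hPA, setIntegral_ge_mul_eq_copula hU hV hUuni hVuni hC hvb',
    setIntegral_ge_eq_copula hU hV hUuni hVuni hC hvb',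
    setIntegral_ge_of_map_eq_uniform hV hVuni hvb']
  field_simp
  ring
end
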